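/- Let A, B be expansive matrices with ε = ln|det(A)|/ln|det(B)|. Then sup_{k ∈ ℤ} ‖(Aᵀ)^{-k} (Bᵀ)^{⌊εk⌋}‖ < ∞ holds if and only if sup_{k ∈ ℤ} ‖A^{-k} B^{⌊εk⌋}‖ < ∞. (Equivalence of A and B is preserved under transposition.) -/

import Mathlib

open Matrix

noncomputable def opNorm {n : Type*} [Fintype n] [DecidableEq n] (A : Matrix n n ℝ) : ℝ :=
  ‖Matrix.toEuclideanCLM (𝕜 := ℝ) (n := n) A‖

def Expansive {n : Type*} [Fintype n] [DecidableEq n] (A : Matrix n n ℝ) : Prop :=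
  IsUnit A ∧ ∀ μ ∈ spectrum ℂ (A.map Complex.ofReal), 1 < ‖μ‖

noncomputable def eps {d : ℕ} (A B : Matrix (Fin d) (Fin d) ℝ) : ℝ :=
  Real.log |A.det| / Real.log |B.det|

/-!
Transposition preserves the operator norm, so with `m k = ⌊ε k⌋` the transposed condition says that
`B ^ m k * A ^ (-k)` is bounded. These are the inverses of `A ^ k * B ^ (-m k)`, which differs from
the original sequence at `-k` only by the factor `B ^ (⌈ε k⌉ - ⌊ε k⌋) ∈ {1, B}`, because
`⌊-x⌋ = -⌈x⌉`. Since `m k ≤ ε k`, these matrices have determinant of modulus at least `1`, and by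
compactness a bounded set of matrices whose determinants stay away from `0` has bounded inverses.
The converse follows by applying this to `Aᵀ` and `Bᵀ`.
-/

open Bornology Set
open scoped Matrix.Norms.L2Operator Pointwise

theorem one_le_zpow_mul_zpow_neg_of_le_logb_mul {a b : ℝ} (ha : 0 < a) (hb : 1 < b) {k m : ℤ}
    (hm : (m : ℝ) ≤ Real.logb b a * k) : 1 ≤ a ^ k * b ^ (-m) := by
  have hb₀ : 0 < b := one_pos.trans hb
  have hpow : b ^ m ≤ a ^ k :=
    calc b ^ m = b ^ (m : ℝ) := (Real.rpow_intCast b m).symm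
      _ ≤ b ^ (Real.logb b a * k) := Real.rpow_le_rpow_of_exponent_le hb.le hm
      _ = a ^ k := by
        rw [Real.rpow_mul hb₀.le, Real.rpow_logb hb₀ hb.ne' ha, Real.rpow_intCast]
  rw [_root_.zpow_neg, ← div_eq_mul_inv, one_le_div (zpow_pos hb₀ m)]
  exact hpow

theorem zpow_ceil_sub_floor_mem {α M : Type*} [Ring α] [LinearOrder α] [IsStrictOrderedRing α]
    [FloorRing α] [DivInvMonoid M] (b : M) (x : α) :
    b ^ (⌈x⌉ - ⌊x⌋) ∈ ({1, b} : Set M) := by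
  have h₁ := Int.ceil_le_floor_add_one x
  have h₂ := Int.floor_le_ceil x
  obtain h | h : ⌈x⌉ - ⌊x⌋ = 0 ∨ ⌈x⌉ - ⌊x⌋ = 1 := by omega
  · simp [h]
  · simp [h]

section Matrix

open Polynomial

variable {n : Type*} [Fintype n] [DecidableEq n]

theorem opNorm_eq_norm (A : Matrix n n ℝ) : opNorm A = ‖A‖ := rfl

theorem Matrix.det_zpow {K : Type*} [Field K] (A : Matrix n n K) (k : ℤ) :
    (A ^ k).det = A.det ^ k := by
  cases k with
  | ofNat k => simp [det_pow]
  | negSucc k => simp [zpow_negSucc, det_pow, det_nonsing_inv]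

theorem Matrix.isBounded_image_inv {S : Set (Matrix n n ℝ)} (hS : IsBounded S) {δ : ℝ}
    (hδ : 0 < δ) (hdet : ∀ X ∈ S, δ ≤ |X.det|) : IsBounded ((·⁻¹) '' S) := by
  obtain ⟨R, hR⟩ := hS.subset_closedBall 0
  set K := Metric.closedBall (0 : Matrix n n ℝ) R ∩ {X | δ ≤ |X.det|}
  have hK : IsCompact K :=
    (isCompact_closedBall 0 R).inter_right
      (isClosed_le continuous_const continuous_id.matrix_det.abs)
  have hinv : ContinuousOn (·⁻¹) K := fun X hX =>
    (continuousAt_matrix_inv X <| by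
      rw [Ring.inverse_eq_inv']
      exact continuousAt_inv₀ (abs_pos.mp (hδ.trans_le hX.2))).continuousWithinAt
  exact (hK.image_of_continuousOn hinv).isBounded.subset
    (image_mono fun X hX => ⟨hR hX, hdet X hX⟩)

theorem Expansive.one_lt_abs_det [Nonempty n] {A : Matrix n n ℝ} (hA : Expansive A) :
    1 < |A.det| := by
  set M := A.map Complex.ofReal
  have hroots : M.charpoly.roots ≠ 0 := by
    intro h
    have := splits_iff_card_roots.mp (IsAlgClosed.splits M.charpoly)
    rw [h, charpoly_natDegree_eq_dim] at this
    exact Fintype.card_ne_zero this.symm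
  calc (1 : ℝ) = (M.charpoly.roots.map fun _ => (1 : ℝ)).prod := by simp
    _ < (M.charpoly.roots.map (‖·‖)).prod :=
      Multiset.prod_map_lt_prod_map hroots _ _ (fun _ _ => one_pos) fun μ hμ =>
        hA.2 μ (mem_spectrum_of_isRoot_charpoly (isRoot_of_mem_roots hμ))
    _ = ‖M.det‖ := by
      rw [det_eq_prod_roots_charpoly]; exact (map_multiset_prod (normHom (α := ℂ)) _).symm
    _ = |A.det| := by
      rw [show M.det = A.det from (Complex.ofRealHom.map_det A).symm, Complex.norm_real,
        Real.norm_eq_abs]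

end Matrix

section Transpose

variable {d : ℕ} {A B : Matrix (Fin d) (Fin d) ℝ}

theorem eps_transpose (A B : Matrix (Fin d) (Fin d) ℝ) : eps Aᵀ Bᵀ = eps A B := by
  simp only [eps, det_transpose]

theorem isBounded_range_zpow_floor_mul_zpow_neg (hA : 1 < |A.det|) (hB : 1 < |B.det|)
    (h : IsBounded (range fun k : ℤ => A ^ (-k) * B ^ ⌊eps A B * k⌋)) :
    IsBounded (range fun k : ℤ => B ^ ⌊eps A B * k⌋ * A ^ (-k)) := by
  have hAu : IsUnit A.det := isUnit_iff_ne_zero.mpr (abs_pos.mp (one_pos.trans hA))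
  have hBu : IsUnit B.det := isUnit_iff_ne_zero.mpr (abs_pos.mp (one_pos.trans hB))
  have hshift : range (fun k : ℤ => A ^ k * B ^ (-⌊eps A B * k⌋)) ⊆
      range (fun k : ℤ => A ^ (-k) * B ^ ⌊eps A B * k⌋) * {1, B} := by
    rintro _ ⟨k, rfl⟩
    refine ⟨_, ⟨-k, rfl⟩, _, zpow_ceil_sub_floor_mem B (eps A B * k), ?_⟩
    dsimp only
    rw [neg_neg, mul_assoc, ← zpow_add hBu, Int.cast_neg, mul_neg, Int.floor_neg]
    congr 2
    ring
  have hdet : ∀ X ∈ range (fun k : ℤ => A ^ k * B ^ (-⌊eps A B * k⌋)), 1 ≤ |X.det| := by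
    rintro _ ⟨k, rfl⟩
    rw [det_mul, det_zpow, det_zpow, abs_mul, abs_zpow, abs_zpow]
    exact one_le_zpow_mul_zpow_neg_of_le_logb_mul (one_pos.trans hA) hB (Int.floor_le _)
  have hinv : (fun k : ℤ => B ^ ⌊eps A B * k⌋ * A ^ (-k)) =
      (·⁻¹) ∘ fun k : ℤ => A ^ k * B ^ (-⌊eps A B * k⌋) := by
    ext1 k
    rw [Function.comp_apply, Matrix.mul_inv_rev, ← Matrix.zpow_neg hAu, ← Matrix.zpow_neg hBu,
      neg_neg]
  rw [hinv, range_comp]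
  exact isBounded_image_inv ((isBounded_mul h (toFinite _).isBounded).subset hshift) one_pos
    hdet

theorem exists_opNorm_transpose_le (hA : 1 < |A.det|) (hB : 1 < |B.det|)
    (h : ∃ M : ℝ, ∀ k : ℤ, opNorm (A ^ (-k) * B ^ ⌊eps A B * k⌋) ≤ M) :
    ∃ M : ℝ, ∀ k : ℤ, opNorm (Aᵀ ^ (-k) * Bᵀ ^ ⌊eps A B * k⌋) ≤ M := by
  have hbdd (f : ℤ → Matrix (Fin d) (Fin d) ℝ) :
      (∃ M : ℝ, ∀ k, opNorm (f k) ≤ M) ↔ IsBounded (range f) := by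
    simp only [isBounded_iff_forall_norm_le, forall_mem_range, opNorm_eq_norm]
  have htranspose (k : ℤ) : opNorm (Aᵀ ^ (-k) * Bᵀ ^ ⌊eps A B * k⌋) =
      opNorm (B ^ ⌊eps A B * k⌋ * A ^ (-k)) := by
    rw [← transpose_zpow, ← transpose_zpow, ← transpose_mul, opNorm_eq_norm, opNorm_eq_norm,
      ← conjTranspose_eq_transpose_of_trivial, l2_opNorm_conjTranspose]
  simp only [htranspose, hbdd] at h ⊢
  exact isBounded_range_zpow_floor_mul_zpow_neg hA hB h

end Transpose

/-- Equivalence of expansive matrices is preserved under transposition. -/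
theorem equiv_transpose_iff {d : ℕ} (A B : Matrix (Fin d) (Fin d) ℝ)
    (hA : Expansive A) (hB : Expansive B) :
    (∃ M : ℝ, ∀ k : ℤ, opNorm (Aᵀ ^ (-k) * Bᵀ ^ ⌊eps A B * k⌋) ≤ M) ↔
    (∃ M : ℝ, ∀ k : ℤ, opNorm (A ^ (-k) * B ^ ⌊eps A B * k⌋) ≤ M) := by
  rcases isEmpty_or_nonempty (Fin d) with hd | hd
  · have hzero (X : Matrix (Fin d) (Fin d) ℝ) : opNorm X ≤ 0 := by
      rw [opNorm_eq_norm, Subsingleton.elim X 0, norm_zero]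
    exact ⟨fun _ => ⟨0, fun _ => hzero _⟩, fun _ => ⟨0, fun _ => hzero _⟩⟩
  have hA' := hA.one_lt_abs_det
  have hB' := hB.one_lt_abs_det
  refine ⟨fun h => ?_, exists_opNorm_transpose_le hA' hB'⟩
  simpa only [transpose_transpose, eps_transpose] using
    exists_opNorm_transpose_le (A := Aᵀ) (B := Bᵀ) (by rwa [det_transpose])
      (by rwa [det_transpose]) (by rwa [eps_transpose])
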